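/- If a squarefree monomial ideal I is weakly polymatroidal, then I is vertex splittable. -/

import Mathlib

open MvPolynomial

namespace Paper

abbrev R (K : Type) [Field K] (n : ℕ) := MvPolynomial (Fin n) K

noncomputable def mon (K : Type) [Field K] {n : ℕ} (a : Fin n →₀ ℕ) : R K n :=
  monomial a 1

def mdeg {n : ℕ} (a : Fin n →₀ ℕ) : ℕ := a.sum fun _ e => e

def IsSqfree {n : ℕ} (a : Fin n →₀ ℕ) : Prop := ∀ i, a i ≤ 1

variable {K : Type} [Field K] {n : ℕ}

/-- A monomial ideal: an ideal generated by a set of monomials. -/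
def IsMonomialIdeal (I : Ideal (R K n)) : Prop :=
  ∃ S : Set (Fin n →₀ ℕ), I = Ideal.span ((mon K) '' S)

/-- The (exponent vectors of the) minimal monomial generators `G(I)` of a monomial
ideal: monomials in `I` such that no proper divisor lies in `I`. -/
def minGens (I : Ideal (R K n)) : Set (Fin n →₀ ℕ) :=
  { a | mon K a ∈ I ∧ ∀ (b : Fin n →₀ ℕ) (i : Fin n),
      a = b + Finsupp.single i 1 → mon K b ∉ I }

/-- Polymatroidal: a monomial ideal generated in a single degree satisfying the
exchange property. -/
def IsPolymatroidal (I : Ideal (R K n)) : Prop :=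
  IsMonomialIdeal I ∧
  (∃ d, ∀ a ∈ minGens I, mdeg a = d) ∧
  ∀ u ∈ minGens I, ∀ v ∈ minGens I, ∀ i : Fin n, v i < u i →
    ∃ j : Fin n, u j < v j ∧
      ∃ w ∈ minGens I, w + Finsupp.single i 1 = u + Finsupp.single j 1

/-- Matroidal: squarefree polymatroidal. -/
def IsMatroidal (I : Ideal (R K n)) : Prop :=
  IsPolymatroidal I ∧ ∀ a ∈ minGens I, IsSqfree a

/-- Weakly polymatroidal with respect to the variable ordering
`x_{σ 0} > x_{σ 1} > ... > x_{σ (n-1)}`. -/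
def IsWeaklyPolymatroidalWrt (σ : Equiv.Perm (Fin n)) (I : Ideal (R K n)) : Prop :=
  IsMonomialIdeal I ∧
  ∀ u ∈ minGens I, ∀ v ∈ minGens I, ∀ t : Fin n,
    (∀ s, s < t → u (σ s) = v (σ s)) → v (σ t) < u (σ t) →
    ∃ j : Fin n, t < j ∧
      ∃ w : Fin n →₀ ℕ,
        w + Finsupp.single (σ j) 1 = v + Finsupp.single (σ t) 1 ∧ mon K w ∈ I

/-- Weakly polymatroidal with respect to the standard ordering `x_1 > ... > x_n`. -/
def IsWeaklyPolymatroidal (I : Ideal (R K n)) : Prop :=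
  IsWeaklyPolymatroidalWrt (Equiv.refl (Fin n)) I

/-- Vertex splittable monomial ideals (Moradi–Khosh-Ahang). Ideals of
`K[V \ {x}]` are encoded as ideals of `R` whose minimal generators do not
involve the variable `x`. -/
inductive VertexSplittable : Ideal (R K n) → Prop
  | principal (a : Fin n →₀ ℕ) : VertexSplittable (Ideal.span {mon K a})
  | bot : VertexSplittable ⊥
  | top : VertexSplittable ⊤
  | split (x : Fin n) (I₁ I₂ : Ideal (R K n)) :
      VertexSplittable I₁ → VertexSplittable I₂ →
      (∀ a ∈ minGens I₁, a x = 0) → (∀ a ∈ minGens I₂, a x = 0) →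
      I₂ ≤ I₁ →
      minGens (Ideal.span {(X x : R K n)} * I₁ + I₂)
        = minGens (Ideal.span {(X x : R K n)} * I₁) ∪ minGens I₂ →
      minGens (Ideal.span {(X x : R K n)} * I₁) ∩ minGens I₂ = ∅ →
      VertexSplittable (Ideal.span {(X x : R K n)} * I₁ + I₂)

/-- Linear quotients: some ordering of the minimal monomial generators such that
each successive colon ideal is generated by a subset of the variables. -/
def HasLinearQuotients (I : Ideal (R K n)) : Prop :=
  IsMonomialIdeal I ∧
  ∃ L : List (Fin n →₀ ℕ), L.Nodup ∧ {a | a ∈ L} = minGens I ∧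
    ∀ (j : ℕ) (hj : j < L.length), 0 < j →
      ∃ S : Set (Fin n),
        Submodule.colon (Ideal.span ((mon K) '' {a | a ∈ L.take j}))
            (Ideal.span {mon K (L.get ⟨j, hj⟩)})
          = Ideal.span ((fun i => (X i : R K n)) '' S)


/-- A (possibly void) abstract simplicial complex on the vertex set `Fin n`. -/
structure SComplex (n : ℕ) where
  faces : Finset (Finset (Fin n))
  down : ∀ F ∈ faces, ∀ G ⊆ F, G ∈ faces

variable {n : ℕ}

def SComplex.IsFacet (Δ : SComplex n) (F : Finset (Fin n)) : Prop :=
  F ∈ Δ.faces ∧ ∀ G ∈ Δ.faces, F ⊆ G → G = F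

/-- Deletion of a vertex. -/
def SComplex.del (Δ : SComplex n) (x : Fin n) : SComplex n where
  faces := Δ.faces.filter (fun F => x ∉ F)
  down := by
    intro F hF G hG
    simp only [Finset.mem_filter] at *
    exact ⟨Δ.down F hF.1 G hG, fun hx => hF.2 (hG hx)⟩

/-- Link of a vertex. -/
def SComplex.lk (Δ : SComplex n) (x : Fin n) : SComplex n where
  faces := Δ.faces.filter (fun F => x ∉ F ∧ insert x F ∈ Δ.faces)
  down := by
    intro F hF G hG
    simp only [Finset.mem_filter] at *
    refine ⟨Δ.down F hF.1 G hG, fun hx => hF.2.1 (hG hx), ?_⟩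
    exact Δ.down _ hF.2.2 _ (Finset.insert_subset_insert x hG)

/-- Vertex decomposability, defined recursively via shedding vertices. -/
inductive VertexDecomposable : SComplex n → Prop
  | simplex (Δ : SComplex n) (F : Finset (Fin n)) :
      Δ.faces = F.powerset → VertexDecomposable Δ
  | shed (Δ : SComplex n) (x : Fin n) :
      VertexDecomposable (Δ.del x) → VertexDecomposable (Δ.lk x) →
      (∀ F ∈ (Δ.lk x).faces, ¬ (Δ.del x).IsFacet F) →
      VertexDecomposable Δ

/-- Shellability (non-pure, Björner–Wachs). -/
def SComplex.Shellable (Δ : SComplex n) : Prop :=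
  ∃ L : List (Finset (Fin n)), L.Nodup ∧ {F | F ∈ L} = {F | Δ.IsFacet F} ∧
    ∀ (i j : ℕ) (hi : i < L.length) (hj : j < L.length), i < j →
      ∃ x ∈ L.get ⟨j, hj⟩ \ L.get ⟨i, hi⟩,
        ∃ (l : ℕ) (hl : l < j),
          L.get ⟨j, hj⟩ \ L.get ⟨l, Nat.lt_trans hl hj⟩ = {x}

/-- The Alexander dual complex `Δ^∨ = { V \ A : A ∉ Δ }`. -/
noncomputable def SComplex.dual (Δ : SComplex n) : SComplex n where
  faces := Finset.univ.filter (fun B => Bᶜ ∉ Δ.faces)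
  down := by
    classical
    intro F hF G hG
    simp only [Finset.mem_filter, Finset.mem_univ, true_and] at *
    intro hGc
    exact hF (Δ.down _ hGc _ (Finset.compl_subset_compl.2 hG))


/-- The squarefree exponent vector of a set of vertices. -/
noncomputable def sqmon {n : ℕ} (F : Finset (Fin n)) : Fin n →₀ ℕ :=
  ∑ i ∈ F, Finsupp.single i 1

/-- The Stanley–Reisner ideal of `Δ`. -/
noncomputable def srIdeal (K : Type) [Field K] {n : ℕ} (Δ : SComplex n) :
    Ideal (MvPolynomial (Fin n) K) :=
  Ideal.span ((fun F => mon K (sqmon F)) '' {F | F ∉ Δ.faces})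


section CM
variable (A : Type) [CommRing A]

/-- Krull dimension of a module: the dimension of `A / ann M`. -/
noncomputable def moduleDim (M : Type) [AddCommGroup M] [Module A M] : WithBot ℕ∞ :=
  ringKrullDim (A ⧸ Submodule.annihilator (⊤ : Submodule A M))

/-- `rs` is an `M`-regular sequence: each entry is a nonzerodivisor on the quotient
of `M` by the previous entries. -/
def IsRegSeq (M : Type) [AddCommGroup M] [Module A M] (rs : List A) : Prop :=
  ∀ (i : ℕ) (hi : i < rs.length),
    ∀ m : M ⧸ (Ideal.span {r | r ∈ rs.take i} • (⊤ : Submodule A M)),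
      rs.get ⟨i, hi⟩ • m = 0 → m = 0

/-- Depth of `M` with respect to the ideal `J`: the supremum of lengths of
`M`-regular sequences contained in `J`. -/
noncomputable def moduleDepth (J : Ideal A) (M : Type) [AddCommGroup M] [Module A M] : ℕ :=
  sSup {k | ∃ rs : List A, rs.length = k ∧ (∀ r ∈ rs, r ∈ J) ∧ IsRegSeq A M rs}

/-- Cohen–Macaulay module (with respect to the ideal `J` playing the role of the
maximal ideal): zero, or depth equals Krull dimension. -/
def IsCMmod (J : Ideal A) (M : Type) [AddCommGroup M] [Module A M] : Prop :=
  Subsingleton M ∨ moduleDim A M = ((moduleDepth A J M : ℕ∞) : WithBot ℕ∞)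

/-- Sequentially Cohen–Macaulay module: a filtration `0 = M₀ ⊂ ... ⊂ M_r = N` with
Cohen–Macaulay quotients of strictly increasing Krull dimension. -/
def IsSeqCM (J : Ideal A) (N : Type) [AddCommGroup N] [Module A N] : Prop :=
  ∃ (r : ℕ) (c : Fin (r + 1) → Submodule A N),
    c 0 = ⊥ ∧ c (Fin.last r) = ⊤ ∧
    (∀ i : Fin r, c i.castSucc ≤ c i.succ) ∧
    (∀ i : Fin r,
      IsCMmod A J (↥(c i.succ) ⧸ (Submodule.comap (c i.succ).subtype (c i.castSucc)))) ∧
    (∀ i j : Fin r, i < j →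
      moduleDim A (↥(c i.succ) ⧸ (Submodule.comap (c i.succ).subtype (c i.castSucc)))
        < moduleDim A (↥(c j.succ) ⧸ (Submodule.comap (c j.succ).subtype (c j.castSucc))))

end CM

variable {K : Type} [Field K] {n : ℕ}

/-- The irrelevant maximal ideal `(x_1, ..., x_n)`. -/
noncomputable def maxIdeal (K : Type) [Field K] (n : ℕ) : Ideal (MvPolynomial (Fin n) K) :=
  Ideal.span (Set.range (X : Fin n → MvPolynomial (Fin n) K))

section Res

/-- The differential of a free complex given by a matrix of polynomials. -/
noncomputable def resDiff (β : ℕ → ℕ)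
    (Mt : (i : ℕ) → Fin (β (i + 1)) → Fin (β i) → MvPolynomial (Fin n) K) (i : ℕ) :
    (Fin (β (i + 1)) →₀ MvPolynomial (Fin n) K) →ₗ[MvPolynomial (Fin n) K]
      (Fin (β i) →₀ MvPolynomial (Fin n) K) :=
  Finsupp.lsum (MvPolynomial (Fin n) K) fun j =>
    LinearMap.toSpanSingleton (MvPolynomial (Fin n) K) _
      (∑ k : Fin (β i), Finsupp.single k (Mt i j k))

/-- The augmentation map sending basis elements to the generators `g`. -/
noncomputable def resAug (β₀ : ℕ) (g : Fin β₀ → MvPolynomial (Fin n) K) :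
    (Fin β₀ →₀ MvPolynomial (Fin n) K) →ₗ[MvPolynomial (Fin n) K] MvPolynomial (Fin n) K :=
  Finsupp.lsum (MvPolynomial (Fin n) K) fun j =>
    LinearMap.toSpanSingleton (MvPolynomial (Fin n) K) _ (g j)

/-- A graded free resolution of the ideal `I`, recorded by Betti numbers `β`,
degree shifts `dg`, homogeneous generators `g` of `I`, and matrices `Mt` of
homogeneous entries, which is exact. -/
structure GradedRes (I : Ideal (MvPolynomial (Fin n) K)) where
  β : ℕ → ℕ
  dg : (i : ℕ) → Fin (β i) → ℕ
  g : Fin (β 0) → MvPolynomial (Fin n) K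
  hg : ∀ j, (g j).IsHomogeneous (dg 0 j)
  Mt : (i : ℕ) → Fin (β (i + 1)) → Fin (β i) → MvPolynomial (Fin n) K
  hMt : ∀ i j k, Mt i j k = 0 ∨
    (dg i k ≤ dg (i + 1) j ∧ (Mt i j k).IsHomogeneous (dg (i + 1) j - dg i k))
  hrange : LinearMap.range (resAug (β 0) g) = I
  hexact0 : LinearMap.ker (resAug (β 0) g) = LinearMap.range (resDiff β Mt 0)
  hexact : ∀ i, LinearMap.ker (resDiff β Mt i) = LinearMap.range (resDiff β Mt (i + 1))

/-- Castelnuovo–Mumford regularity, as the infimum over all graded free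
resolutions of the maximum of `(shift) - (homological degree)`. -/
noncomputable def reg (I : Ideal (MvPolynomial (Fin n) K)) : ℕ∞ :=
  sInf { r : ℕ∞ | ∃ Res : GradedRes I,
    ∀ (i : ℕ) (j : Fin (Res.β i)), (Res.dg i j : ℕ∞) ≤ r + i }

/-- `I` has a `d`-linear resolution. -/
def HasLinearRes (I : Ideal (MvPolynomial (Fin n) K)) (d : ℕ) : Prop :=
  ∃ Res : GradedRes I, ∀ (i : ℕ) (j : Fin (Res.β i)), Res.dg i j = d + i

/-- The ideal generated by the degree-`d` elements of `I`. -/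
noncomputable def compIdeal (I : Ideal (MvPolynomial (Fin n) K)) (d : ℕ) : Ideal (MvPolynomial (Fin n) K) :=
  Ideal.span { f | f ∈ I ∧ f.IsHomogeneous d }

/-- Componentwise linear ideal. -/
def ComponentwiseLinear (I : Ideal (MvPolynomial (Fin n) K)) : Prop :=
  ∀ d, compIdeal I d = ⊥ ∨ HasLinearRes (compIdeal I d) d

end Res

/-!
Let `x_t` be the first variable dividing some minimal generator of `I`. Sorting `G(I)` by
divisibility by `x_t` writes `I = x_t I₁ + I₂`, where `I₁` is generated by the `u / x_t` and `I₂`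
by the generators not divisible by `x_t`; squarefreeness keeps `x_t` out of `G(I₁)`. For
`v ∈ G(I₂)` and `u ∈ G(I)` divisible by `x_t`, the vectors agree before `t`, so the exchange
property yields `x_t v / x_j ∈ I` with `j > t`, and minimality of `v` forces this element to lie
in `x_t I₁`; hence `I₂ ⊆ I₁`. The exchange property passes to `I₁` and `I₂`, whose generators
avoid `x_1, …, x_t`, so induction on `t` finishes.
-/

section MonomialIdeal

variable {I : Ideal (R K n)}

lemma mon_mem_of_le {a b : Fin n →₀ ℕ} (hab : a ≤ b) (ha : mon K a ∈ I) : mon K b ∈ I := by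
  have hmul : mon K b = monomial (b - a) 1 * mon K a := by
    rw [mon, mon, monomial_mul, one_mul, tsub_add_cancel_of_le hab]
  exact hmul ▸ I.mul_mem_left _ ha

lemma mem_minGens_iff {a : Fin n →₀ ℕ} : a ∈ minGens I ↔ Minimal (fun b => mon K b ∈ I) a := by
  refine ⟨fun ⟨ha, hmin⟩ => ⟨ha, fun b hb hba => ?_⟩, fun ⟨ha, hmin⟩ => ⟨ha, ?_⟩⟩
  · by_contra hab
    obtain ⟨i, hi⟩ : ∃ i, b i < a i := by
      by_contra! h
      exact hab (Finsupp.le_def.2 h)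
    have hle : b ≤ a - Finsupp.single i 1 := fun j => by
      simp only [Finsupp.coe_tsub, Pi.sub_apply, Finsupp.single_apply]
      have := hba j
      split_ifs with h <;> subst_vars <;> omega
    refine hmin _ i ?_ (mon_mem_of_le hle hb)
    exact (tsub_add_cancel_of_le (Finsupp.single_le_iff.2 (by omega))).symm
  · rintro b i rfl hb
    have := hmin hb le_self_add i
    simp at this

lemma isAntichain_minGens (I : Ideal (R K n)) : IsAntichain (· ≤ ·) (minGens I) := by
  have h := setOfPred_minimal_antichain (fun b : Fin n →₀ ℕ => mon K b ∈ I)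
  simp_rw [← mem_minGens_iff] at h
  exact h

lemma exists_minGens_le {a : Fin n →₀ ℕ} (ha : mon K a ∈ I) : ∃ g ∈ minGens I, g ≤ a := by
  obtain ⟨g, hga, hg⟩ := exists_minimal_le_of_wellFoundedLT (fun b => mon K b ∈ I) a ha
  exact ⟨g, mem_minGens_iff.2 hg, hga⟩

lemma mon_mem_span_iff {S : Set (Fin n →₀ ℕ)} {a : Fin n →₀ ℕ} :
    mon K a ∈ Ideal.span (mon K '' S) ↔ ∃ s ∈ S, s ≤ a := by
  have hS : mon K '' S = (fun s => monomial s (1 : K)) '' S := rfl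
  rw [hS, mon, mem_ideal_span_monomial_image]
  simp

lemma minGens_span_of_isAntichain {S : Set (Fin n →₀ ℕ)} (hS : IsAntichain (· ≤ ·) S) :
    minGens (Ideal.span (mon K '' S)) = S := by
  ext a
  rw [mem_minGens_iff, ← hS.minimal_mem_upperClosure_iff_mem]
  simp only [mon_mem_span_iff, mem_upperClosure]

lemma IsMonomialIdeal.eq_span_minGens (hI : IsMonomialIdeal I) :
    I = Ideal.span (mon K '' minGens I) := by
  obtain ⟨S, rfl⟩ := hI
  refine le_antisymm (Ideal.span_le.2 ?_) (Ideal.span_le.2 ?_)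
  · rintro _ ⟨s, hs, rfl⟩
    exact mon_mem_span_iff.2 (exists_minGens_le (Ideal.subset_span ⟨s, hs, rfl⟩))
  · rintro _ ⟨g, hg, rfl⟩
    exact hg.1

lemma span_mon_mul_span (a : Fin n →₀ ℕ) (S : Set (Fin n →₀ ℕ)) :
    Ideal.span {mon K a} * Ideal.span (mon K '' S) = Ideal.span (mon K '' ((a + ·) '' S)) := by
  rw [Ideal.span_mul_span', Set.singleton_mul, Set.image_image, Set.image_image]
  simp only [mon, monomial_mul, one_mul]

end MonomialIdeal

lemma Finsupp.exists_add_single_of_add_single_eq {ι : Type*} {w v : ι →₀ ℕ} {i j : ι}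
    (h : w + Finsupp.single j 1 = v + Finsupp.single i 1) (hij : i ≠ j) :
    ∃ c, w = c + Finsupp.single i 1 ∧ v = c + Finsupp.single j 1 := by
  have hwi : Finsupp.single i 1 ≤ w := by
    have := DFunLike.congr_fun h i
    simp [hij.symm] at this
    simp [Finsupp.single_le_iff, this]
  refine ⟨w - Finsupp.single i 1, (tsub_add_cancel_of_le hwi).symm, ?_⟩
  apply add_right_cancel (b := Finsupp.single i 1)
  rw [add_right_comm, tsub_add_cancel_of_le hwi, h]

section Splitting

variable {I : Ideal (R K n)} {t : Fin n}

lemma isWeaklyPolymatroidal_iff : IsWeaklyPolymatroidal I ↔ IsMonomialIdeal I ∧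
    ∀ u ∈ minGens I, ∀ v ∈ minGens I, ∀ t : Fin n, (∀ s < t, u s = v s) → v t < u t →
      ∃ j, t < j ∧ ∃ w : Fin n →₀ ℕ,
        w + Finsupp.single j 1 = v + Finsupp.single t 1 ∧ mon K w ∈ I :=
  Iff.rfl

/-- The exponents of `u / x_t` for the minimal generators `u` of `I` divisible by `x_t`. -/
def quotGens (I : Ideal (R K n)) (t : Fin n) : Set (Fin n →₀ ℕ) :=
  {b | b t = 0 ∧ b + Finsupp.single t 1 ∈ minGens I}

def avoidGens (I : Ideal (R K n)) (t : Fin n) : Set (Fin n →₀ ℕ) :=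
  {a ∈ minGens I | a t = 0}

noncomputable def quotIdeal (I : Ideal (R K n)) (t : Fin n) : Ideal (R K n) :=
  Ideal.span (mon K '' quotGens I t)

noncomputable def avoidIdeal (I : Ideal (R K n)) (t : Fin n) : Ideal (R K n) :=
  Ideal.span (mon K '' avoidGens I t)

lemma minGens_quotIdeal : minGens (quotIdeal I t) = quotGens I t := by
  refine minGens_span_of_isAntichain fun b hb b' hb' hne hle => hne ?_
  exact add_right_cancel <|
    (isAntichain_minGens I).eq hb.2 hb'.2 (add_le_add_left hle _)

lemma minGens_avoidIdeal : minGens (avoidIdeal I t) = avoidGens I t :=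
  minGens_span_of_isAntichain ((isAntichain_minGens I).subset fun _ ha => ha.1)

lemma single_add_image_quotGens (hsq : ∀ a ∈ minGens I, IsSqfree a) :
    (Finsupp.single t 1 + ·) '' quotGens I t = {a ∈ minGens I | a t ≠ 0} := by
  ext a
  constructor
  · rintro ⟨b, ⟨hbt, hb⟩, rfl⟩
    dsimp only
    exact ⟨by rwa [add_comm], by simp⟩
  · rintro ⟨ha, hat⟩
    have hta : Finsupp.single t 1 ≤ a :=
      Finsupp.single_le_iff.2 (Nat.one_le_iff_ne_zero.2 hat)
    refine ⟨a - Finsupp.single t 1, ⟨?_, ?_⟩, ?_⟩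
    · simp [le_antisymm (hsq a ha t) (Nat.one_le_iff_ne_zero.2 hat)]
    · rwa [tsub_add_cancel_of_le hta]
    · exact add_tsub_cancel_of_le hta

lemma X_mul_quotIdeal (hsq : ∀ a ∈ minGens I, IsSqfree a) :
    Ideal.span {(X t : R K n)} * quotIdeal I t =
      Ideal.span (mon K '' {a ∈ minGens I | a t ≠ 0}) := by
  rw [← single_add_image_quotGens hsq]
  exact span_mon_mul_span _ _

lemma sep_union_avoidGens : {a ∈ minGens I | a t ≠ 0} ∪ avoidGens I t = minGens I := by
  ext a
  by_cases hat : a t = 0 <;> simp [avoidGens, hat]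

lemma X_mul_quotIdeal_add_avoidIdeal (hI : IsMonomialIdeal I)
    (hsq : ∀ a ∈ minGens I, IsSqfree a) :
    Ideal.span {(X t : R K n)} * quotIdeal I t + avoidIdeal I t = I := by
  rw [X_mul_quotIdeal hsq, avoidIdeal, Submodule.add_eq_sup, ← Ideal.span_union,
    ← Set.image_union, sep_union_avoidGens, ← hI.eq_span_minGens]

lemma exists_quotGens_or_avoidGens_le (hsq : ∀ a ∈ minGens I, IsSqfree a) {c : Fin n →₀ ℕ}
    (hc : mon K (c + Finsupp.single t 1) ∈ I) : ∃ d ∈ quotGens I t ∪ avoidGens I t, d ≤ c := by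
  obtain ⟨g, hg, hgc⟩ := exists_minGens_le hc
  by_cases hgt : g t = 0
  · refine ⟨g, Or.inr ⟨hg, hgt⟩, fun i => ?_⟩
    rcases eq_or_ne t i with rfl | hti
    · simp [hgt]
    · simpa [Finsupp.single_apply, hti] using hgc i
  · have hgt1 : g t = 1 := le_antisymm (hsq g hg t) (Nat.one_le_iff_ne_zero.2 hgt)
    have htg : Finsupp.single t 1 ≤ g := Finsupp.single_le_iff.2 hgt1.ge
    refine ⟨g - Finsupp.single t 1, Or.inl ⟨by simp [hgt1], ?_⟩, tsub_le_iff_right.2 hgc⟩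
    rwa [tsub_add_cancel_of_le htg]

lemma avoidIdeal_le_quotIdeal (hWP : IsWeaklyPolymatroidal I)
    (hsq : ∀ a ∈ minGens I, IsSqfree a) (hbelow : ∀ a ∈ minGens I, ∀ s < t, a s = 0)
    {u : Fin n →₀ ℕ} (hu : u ∈ minGens I) (hut : u t ≠ 0) : avoidIdeal I t ≤ quotIdeal I t := by
  refine Ideal.span_le.2 ?_
  rintro _ ⟨v, ⟨hv, hvt⟩, rfl⟩
  obtain ⟨j, htj, w, hw, hwI⟩ := (isWeaklyPolymatroidal_iff.1 hWP).2 u hu v hv t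
    (fun s hs => by rw [hbelow u hu s hs, hbelow v hv s hs]) (by omega)
  obtain ⟨c, rfl, rfl⟩ := Finsupp.exists_add_single_of_add_single_eq hw htj.ne
  obtain ⟨d, hd | hd, hdc⟩ := exists_quotGens_or_avoidGens_le hsq hwI
  · exact mon_mem_span_iff.2 ⟨d, hd, hdc.trans le_self_add⟩
  · have hdv := (isAntichain_minGens I).eq hd.1 hv (hdc.trans le_self_add)
    have := hdv ▸ hdc j
    simp at this

lemma IsWeaklyPolymatroidal.avoidIdeal (hWP : IsWeaklyPolymatroidal I)
    (hbelow : ∀ a ∈ minGens I, ∀ s < t, a s = 0) : IsWeaklyPolymatroidal (avoidIdeal I t) := by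
  refine isWeaklyPolymatroidal_iff.2 ⟨⟨_, rfl⟩, fun u hu v hv t' hagree hlt => ?_⟩
  rw [minGens_avoidIdeal] at hu hv
  obtain ⟨j, ht'j, w, hw, hwI⟩ :=
    (isWeaklyPolymatroidal_iff.1 hWP).2 u hu.1 v hv.1 t' hagree hlt
  have htt' : t < t' := by
    refine lt_of_le_of_ne (not_lt.1 fun h => ?_) fun h => ?_
    · have := hbelow u hu.1 t' h
      omega
    · subst h
      exact absurd hu.2 (by omega)
  obtain ⟨g, hg, hgw⟩ := exists_minGens_le hwI
  refine ⟨j, ht'j, w, hw, mon_mem_span_iff.2 ⟨g, ⟨hg, ?_⟩, hgw⟩⟩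
  have hwt := DFunLike.congr_fun hw t
  simp [htt'.ne, (htt'.trans ht'j).ne, hv.2] at hwt
  simpa [hwt] using hgw t

lemma IsWeaklyPolymatroidal.quotIdeal (hWP : IsWeaklyPolymatroidal I)
    (hsq : ∀ a ∈ minGens I, IsSqfree a) (hbelow : ∀ a ∈ minGens I, ∀ s < t, a s = 0) :
    IsWeaklyPolymatroidal (quotIdeal I t) := by
  refine isWeaklyPolymatroidal_iff.2 ⟨⟨_, rfl⟩, fun u hu v hv t' hagree hlt => ?_⟩
  rw [minGens_quotIdeal] at hu hv
  have htt' : t < t' := by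
    refine lt_of_le_of_ne (not_lt.1 fun h => ?_) fun h => ?_
    · have := hbelow _ hu.2 t' h
      simp [h.ne'] at this
      omega
    · subst h
      exact absurd hu.1 (by omega)
  obtain ⟨j, ht'j, w, hw, hwI⟩ := (isWeaklyPolymatroidal_iff.1 hWP).2 _ hu.2 _ hv.2 t'
    (fun s hs => by simp [hagree s hs]) (by simpa [Finsupp.single_apply, htt'.ne] using hlt)
  obtain ⟨c, rfl, hvc⟩ := Finsupp.exists_add_single_of_add_single_eq hw ht'j.ne
  obtain ⟨c, rfl, rfl⟩ :=
    Finsupp.exists_add_single_of_add_single_eq hvc.symm (htt'.trans ht'j).ne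
  refine ⟨j, ht'j, c + Finsupp.single t' 1, add_right_comm _ _ _, ?_⟩
  rw [add_right_comm] at hwI
  obtain ⟨d, hd | hd, hdc⟩ := exists_quotGens_or_avoidGens_le hsq hwI
  · exact mon_mem_span_iff.2 ⟨d, hd, hdc⟩
  · exact avoidIdeal_le_quotIdeal hWP hsq hbelow hu.2 (by simp)
      (mon_mem_span_iff.2 ⟨d, hd, hdc⟩)

end Splitting

section VertexSplittable

variable {I : Ideal (R K n)}

lemma VertexSplittable.of_forall_minGens_eq_zero (hI : IsMonomialIdeal I)
    (h : ∀ a ∈ minGens I, a = 0) : VertexSplittable I := by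
  rcases Set.subset_singleton_iff_eq.1 h with h0 | h0
  · rw [hI.eq_span_minGens, h0, Set.image_empty, Ideal.span_empty]
    exact .bot
  · rw [hI.eq_span_minGens, h0, Set.image_singleton]
    exact .principal 0

lemma VertexSplittable.of_quotIdeal_avoidIdeal (hI : IsMonomialIdeal I)
    (hsq : ∀ a ∈ minGens I, IsSqfree a) (t : Fin n) (hle : avoidIdeal I t ≤ quotIdeal I t)
    (h₁ : VertexSplittable (quotIdeal I t)) (h₂ : VertexSplittable (avoidIdeal I t)) :
    VertexSplittable I := by
  have hX :
      minGens (Ideal.span {(X t : R K n)} * quotIdeal I t) = {a ∈ minGens I | a t ≠ 0} := by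
    rw [X_mul_quotIdeal hsq]
    exact minGens_span_of_isAntichain ((isAntichain_minGens I).subset fun _ ha => ha.1)
  rw [← X_mul_quotIdeal_add_avoidIdeal hI hsq (t := t)]
  refine .split t _ _ h₁ h₂ (by rw [minGens_quotIdeal]; exact fun a ha => ha.1)
    (by rw [minGens_avoidIdeal]; exact fun a ha => ha.2) hle ?_ ?_
  · rw [X_mul_quotIdeal_add_avoidIdeal hI hsq, hX, minGens_avoidIdeal, sep_union_avoidGens]
  · rw [hX, minGens_avoidIdeal, Set.eq_empty_iff_forall_notMem]
    exact fun a ⟨⟨_, hat⟩, _, hat'⟩ => hat hat'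

theorem vertexSplittable_of_vanishing_below {k : ℕ} (hk : k ≤ n) {I : Ideal (R K n)}
    (hWP : IsWeaklyPolymatroidal I) (hsq : ∀ a ∈ minGens I, IsSqfree a)
    (hbelow : ∀ a ∈ minGens I, ∀ s : Fin n, (s : ℕ) < k → a s = 0) : VertexSplittable I := by
  induction hk using Nat.decreasingInduction generalizing I with
  | self =>
    exact .of_forall_minGens_eq_zero hWP.1 fun a ha => Finsupp.ext fun s => hbelow a ha s s.2
  | of_succ k hk ih =>
    set t : Fin n := ⟨k, hk⟩
    have hbelow_t : ∀ a ∈ minGens I, ∀ s < t, a s = 0 := fun a ha s hs => hbelow a ha s hs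
    have hnext : ∀ a : Fin n →₀ ℕ, a t = 0 → (∃ g ∈ minGens I, a ≤ g) →
        ∀ s : Fin n, (s : ℕ) < k + 1 → a s = 0 := by
      rintro a hat ⟨g, hg, hag⟩ s hs
      rcases Nat.lt_succ_iff_lt_or_eq.1 hs with hs | hs
      · exact Nat.eq_zero_of_le_zero ((hag s).trans (hbelow g hg s hs).le)
      · rwa [show s = t from Fin.ext hs]
    by_cases hu : ∃ u ∈ minGens I, u t ≠ 0
    · obtain ⟨u, hu, hut⟩ := hu
      refine .of_quotIdeal_avoidIdeal hWP.1 hsq t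
        (avoidIdeal_le_quotIdeal hWP hsq hbelow_t hu hut)
        (ih (hWP.quotIdeal hsq hbelow_t) ?_ ?_) (ih (hWP.avoidIdeal hbelow_t) ?_ ?_)
      · rw [minGens_quotIdeal]
        exact fun b hb i => (Nat.le_add_right _ _).trans (hsq _ hb.2 i)
      · rw [minGens_quotIdeal]
        exact fun b hb => hnext b hb.1 ⟨_, hb.2, le_self_add⟩
      · rw [minGens_avoidIdeal]
        exact fun a ha => hsq a ha.1
      · rw [minGens_avoidIdeal]
        exact fun a ha => hnext a ha.2 ⟨a, ha.1, le_rfl⟩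
    · push Not at hu
      exact ih hWP hsq fun a ha => hnext a (hu a ha) ⟨a, ha, le_rfl⟩

end VertexSplittable

/-- A squarefree weakly polymatroidal ideal is vertex splittable. -/
theorem stmt6 {K : Type} [Field K] {n : ℕ} (I : Ideal (R K n))
    (hsq : ∀ a ∈ minGens I, IsSqfree a)
    (h : IsWeaklyPolymatroidal I) : VertexSplittable I :=
  vertexSplittable_of_vanishing_below (Nat.zero_le n) h hsq fun _ _ _ hs =>
    absurd hs (Nat.not_lt_zero _)

end Paper
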